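/- arXiv:1809.03022 — 4 statements merged into one kernel-verified Lean document; each statement's English description precedes it below -/
import Mathlib

section
/- Let m ≥ 1 be an integer and let p be analytic in the open unit disc Δ = {z ∈ ℂ : |z| < 1} with p(0) = 1, with the derivatives p^(j)(0) = 0 for 1 ≤ j ≤ m−1 and p^(m)(0) ≠ 0 (i.e. p(z) = 1 + Σ_{n≥m} c_n zⁿ with c_m ≠ 0), and with p(z) ≠ 0 for all z ∈ Δ. Suppose there exists a point z₀ ∈ Δ such that Re p(z) > 0 for all z with |z| < |z₀|, Re p(z₀) = 0, and p(z₀) ≠ 0. If p(z₀) = −i·a for some real a > 0, then z₀·p′(z₀)/p(z₀) = i·k for some real number k satisfying k ≤ −(m/2)·(a + 1/a) ≤ −m ≤ −1. -/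
/-!
The Cayley transform `w = (1 - p) / (1 + p)` maps the closed disc `|z| ≤ |z₀|` into the closed
unit disc, vanishes to order `m` at `0`, and has `|w z₀| = 1` because `Re p z₀ = 0`.
The Schwarz lemma of order `m` gives `|w (t z₀)| ≤ t ^ m`, and Jack's lemma then gives
`z₀ w'(z₀) = k₀ w(z₀)` with `k₀` real and `k₀ ≥ m`. As `w' = -2 p' / (1 + p) ^ 2`, this reads
`2 z₀ p'(z₀) = -k₀ (1 - p(z₀) ^ 2)`; at `p(z₀) = -i a` it becomes `z₀ p'(z₀) / p(z₀) = i k` with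
`k = -(k₀ / 2) (a + 1 / a)`, and `a + 1 / a ≥ 2`.
-/

open Complex Metric Filter Set
open scoped Topology ComplexConjugate

theorem HasDerivAt.le_of_eventually_le_of_eq {f g : ℝ → ℝ} {f' g' a : ℝ}
    (hf : HasDerivAt f f' a) (hg : HasDerivAt g g' a) (hle : ∀ᶠ x in 𝓝[<] a, f x ≤ g x)
    (heq : f a = g a) : g' ≤ f' := by
  have hslope := (hasDerivAt_iff_tendsto_slope.mp (hg.sub hf)).mono_left
    (nhdsWithin_mono a fun x (hx : x ∈ Iio a) => ne_of_lt hx)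
  refine sub_nonpos.mp (le_of_tendsto hslope ?_)
  filter_upwards [hle, self_mem_nhdsWithin] with x hx (hxa : x < a)
  rw [slope_def_field]
  exact div_nonpos_of_nonneg_of_nonpos (by simp [heq]; linarith) (by linarith)

namespace Complex

theorem norm_le_div_pow_of_mapsTo_ball {f : ℂ → ℂ} {R : ℝ} {m : ℕ} {z : ℂ}
    (hd : DifferentiableOn ℂ f (ball 0 R)) (hmaps : MapsTo f (ball 0 R) (closedBall 0 1))
    (hord : (m : ℕ∞) ≤ analyticOrderAt f 0) (hz : z ∈ ball 0 R) : ‖f z‖ ≤ (‖z‖ / R) ^ m := by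
  rcases m with _ | n
  · simpa using hmaps hz
  have han : AnalyticAt ℂ f 0 := hd.analyticAt (ball_mem_nhds 0 (pos_of_mem_ball hz))
  obtain ⟨g, hg, hfg⟩ := (natCast_le_analyticOrderAt han).mp hord
  have hf0 : f 0 = 0 := by simpa using hfg.self_of_nhds
  have hlittle : (f · - f 0) =o[𝓝 0] fun w => ‖w - 0‖ ^ n := by
    refine (((Asymptotics.isLittleO_pow_pow n.lt_succ_self).norm_right).mul_isBigO
      (hg.continuousAt.tendsto.isBigO_one ℝ)).congr' ?_ ?_
    · filter_upwards [hfg] with w hw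
      simp [hw, hf0]
    · filter_upwards with w
      simp
  have hmaps' : MapsTo f (ball 0 R) (closedBall (f 0) 1) := by rwa [hf0]
  simpa [hf0] using dist_le_mul_div_pow_of_mapsTo_ball_of_isLittleO hd hmaps' hlittle hz

theorem norm_apply_ofReal_mul_le_pow {f : ℂ → ℂ} {m : ℕ} {z₀ : ℂ} {t : ℝ} (hz₀ : z₀ ≠ 0)
    (hd : DifferentiableOn ℂ f (ball 0 ‖z₀‖)) (hmaps : MapsTo f (ball 0 ‖z₀‖) (closedBall 0 1))
    (hord : (m : ℕ∞) ≤ analyticOrderAt f 0) (ht : t ∈ Ioo 0 1) : ‖f (t * z₀)‖ ≤ t ^ m := by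
  have hz₀pos : 0 < ‖z₀‖ := norm_pos_iff.mpr hz₀
  have hnorm : ‖(t : ℂ) * z₀‖ = t * ‖z₀‖ := by
    rw [norm_mul, norm_real, Real.norm_of_nonneg ht.1.le]
  have hmem : (t : ℂ) * z₀ ∈ ball 0 ‖z₀‖ := by
    rw [mem_ball_zero_iff, hnorm]
    exact mul_lt_of_lt_one_left hz₀pos ht.2
  simpa [hz₀pos.ne', abs_of_pos ht.1] using norm_le_div_pow_of_mapsTo_ball hd hmaps hord hmem

theorem jack_lemma {w : ℂ → ℂ} {z₀ : ℂ} {m : ℕ} (hw : DifferentiableAt ℂ w z₀)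
    (hw₀ : w z₀ ≠ 0) (hsphere : ∀ z, ‖z‖ = ‖z₀‖ → ‖w z‖ ≤ ‖w z₀‖)
    (hradial : ∀ t ∈ Ioo (0 : ℝ) 1, ‖w (t * z₀)‖ ≤ t ^ m * ‖w z₀‖) :
    ∃ k : ℝ, m ≤ k ∧ z₀ * deriv w z₀ = k * w z₀ := by
  -- With `c = conj (w z₀)`, `Re (c * w z)` is maximal at `z₀` on the circle `‖z‖ = ‖z₀‖`
  -- and at most `t ^ m * ‖w z₀‖ ^ 2` at `t * z₀`: the first fact forces `X.im = 0`,
  -- the second bounds `X.re` from below.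
  set c := conj (w z₀)
  set X := c * (deriv w z₀ * z₀) with hX
  have hbound : ∀ z, (c * w z).re ≤ ‖w z₀‖ * ‖w z‖ := fun z =>
    (re_le_norm _).trans_eq (by rw [norm_mul, norm_conj])
  have hc : c * w z₀ = (‖w z₀‖ ^ 2 : ℝ) := by simp [c, conj_mul']
  have hX_im : X.im = 0 := by
    have hrot : HasDerivAt (fun ζ : ℂ => c * w (z₀ * exp (ζ * I))) (X * I) ((0 : ℝ) : ℂ) := by
      have hexp : HasDerivAt (fun ζ : ℂ => z₀ * exp (ζ * I)) (z₀ * I) ((0 : ℝ) : ℂ) := by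
        simpa using ((hasDerivAt_id ((0 : ℝ) : ℂ)).mul_const I).cexp.const_mul z₀
      have := (hw.hasDerivAt.comp_of_eq _ hexp (by simp)).const_mul c
      rwa [show X * I = c * (deriv w z₀ * (z₀ * I)) by rw [hX]; ring]
    have hmax : IsLocalMax (fun θ : ℝ => (c * w (z₀ * exp (θ * I))).re) 0 := by
      refine Eventually.of_forall fun θ => (hbound _).trans ?_
      simp only [ofReal_zero, zero_mul, exp_zero, mul_one, hc, ofReal_re]
      have := hsphere (z₀ * exp (θ * I)) (by simp [norm_exp_ofReal_mul_I])
      nlinarith [norm_nonneg (w z₀)]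
    simpa using hmax.hasDerivAt_eq_zero hrot.real_of_complex
  have hX_re : m * ‖w z₀‖ ^ 2 ≤ X.re := by
    have hrad : HasDerivAt (fun ζ : ℂ => c * w (ζ * z₀)) X ((1 : ℝ) : ℂ) := by
      simpa using (hw.hasDerivAt.comp_of_eq _
        ((hasDerivAt_id ((1 : ℝ) : ℂ)).mul_const z₀) (by simp)).const_mul c
    have hpow : HasDerivAt (fun t : ℝ => ‖w z₀‖ ^ 2 * t ^ m) (‖w z₀‖ ^ 2 * m) 1 := by
      simpa using (hasDerivAt_pow m (1 : ℝ)).const_mul (‖w z₀‖ ^ 2)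
    refine (hrad.real_of_complex.le_of_eventually_le_of_eq hpow ?_ ?_).trans_eq' (by ring)
    · filter_upwards [Ioo_mem_nhdsLT one_pos] with t ht
      refine (hbound _).trans ?_
      have := hradial t ht
      nlinarith [norm_nonneg (w z₀)]
    · simp only [ofReal_one, one_mul, one_pow, mul_one, hc, ofReal_re]
  have hnorm : 0 < ‖w z₀‖ ^ 2 := by positivity
  refine ⟨X.re / ‖w z₀‖ ^ 2, (le_div_iff₀ hnorm).mpr hX_re, ?_⟩
  have hXreal : (X.re : ℂ) = X := ext (by simp) (by simp [hX_im])
  have hnorm' : ((‖w z₀‖ ^ 2 : ℝ) : ℂ) ≠ 0 := by exact_mod_cast hnorm.ne'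
  rw [ofReal_div, hXreal, div_mul_eq_mul_div, eq_div_iff hnorm', ← hc]
  ring

theorem norm_one_sub_le_norm_one_add {ζ : ℂ} (h : 0 ≤ ζ.re) : ‖1 - ζ‖ ≤ ‖1 + ζ‖ := by
  rw [← sq_le_sq₀ (norm_nonneg _) (norm_nonneg _), ← normSq_eq_norm_sq, ← normSq_eq_norm_sq]
  simp only [normSq_apply, sub_re, add_re, sub_im, add_im, one_re, one_im]
  nlinarith

theorem one_add_ne_zero_of_re_nonneg {ζ : ℂ} (h : 0 ≤ ζ.re) : 1 + ζ ≠ 0 := by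
  intro h0
  have := congrArg re h0
  simp only [add_re, one_re, zero_re] at this
  linarith

theorem norm_one_sub_div_one_add_le_one {ζ : ℂ} (h : 0 ≤ ζ.re) : ‖(1 - ζ) / (1 + ζ)‖ ≤ 1 := by
  rw [norm_div]
  exact div_le_one_of_le₀ (norm_one_sub_le_norm_one_add h) (norm_nonneg _)

theorem norm_one_sub_div_one_add_of_re_eq_zero {ζ : ℂ} (h : ζ.re = 0) :
    ‖(1 - ζ) / (1 + ζ)‖ = 1 := by
  have hle : ‖1 - ζ‖ ≤ ‖1 + ζ‖ := norm_one_sub_le_norm_one_add h.ge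
  have hge : ‖1 + ζ‖ ≤ ‖1 - ζ‖ := by
    simpa [sub_eq_add_neg] using norm_one_sub_le_norm_one_add (ζ := -ζ) (by simp [h])
  rw [norm_div, le_antisymm hle hge, div_self]
  simpa using one_add_ne_zero_of_re_nonneg h.ge

end Complex

theorem HasDerivAt.one_sub_div_one_add {p : ℂ → ℂ} {p' z : ℂ} (hp : HasDerivAt p p' z)
    (hz : 1 + p z ≠ 0) :
    HasDerivAt (fun z => (1 - p z) / (1 + p z)) (-2 * p' / (1 + p z) ^ 2) z := by
  have := (hp.const_sub 1).fun_div (hp.const_add 1) hz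
  rwa [show -p' * (1 + p z) - (1 - p z) * p' = -2 * p' by ring] at this

theorem natCast_le_analyticOrderAt_one_sub_div_one_add {p : ℂ → ℂ} {m : ℕ}
    (hp : AnalyticAt ℂ p 0) (hp0 : p 0 = 1)
    (hjder : ∀ j : ℕ, 1 ≤ j → j ≤ m - 1 → iteratedDeriv j p 0 = 0) :
    (m : ℕ∞) ≤ analyticOrderAt (fun z => (1 - p z) / (1 + p z)) 0 := by
  have hsub : (m : ℕ∞) ≤ analyticOrderAt (fun z => p z - 1) 0 := by
    rw [natCast_le_analyticOrderAt_iff_iteratedDeriv_eq_zero (hp.fun_sub analyticAt_const)]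
    rintro (_ | j) hj
    · simp [hp0]
    · rw [iteratedDeriv_succ', deriv_sub_const_fun, ← iteratedDeriv_succ']
      exact hjder (j + 1) (by omega) (by omega)
  obtain ⟨g, hg, hpg⟩ := (natCast_le_analyticOrderAt (hp.fun_sub analyticAt_const)).mp hsub
  have hden : 1 + p 0 ≠ 0 := by norm_num [hp0]
  refine (natCast_le_analyticOrderAt
    ((analyticAt_const.fun_sub hp).fun_div (analyticAt_const.fun_add hp) hden)).mpr
    ⟨fun z => -g z / (1 + p z), hg.fun_neg.fun_div (analyticAt_const.fun_add hp) hden, ?_⟩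
  filter_upwards [hpg] with z hz
  rw [sub_zero, smul_eq_mul] at hz ⊢
  rw [mul_div_assoc', mul_neg, ← hz]
  ring

theorem re_nonneg_of_norm_le {p : ℂ → ℂ} {R : ℝ} {z : ℂ} (hR : R ≠ 0)
    (hre : ∀ z : ℂ, ‖z‖ < R → 0 < (p z).re) (hp : ContinuousAt p z) (hz : ‖z‖ ≤ R) :
    0 ≤ (p z).re :=
  ContinuousWithinAt.closure_le (s := ball 0 R) (f := fun _ => 0) (g := fun z => (p z).re)
    (by rwa [closure_ball _ hR, mem_closedBall_zero_iff]) continuousWithinAt_const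
    (continuous_re.continuousAt.comp hp).continuousWithinAt
    fun y hy => (hre y (mem_ball_zero_iff.mp hy)).le

theorem nunokawa_lemma {p : ℂ → ℂ} {m : ℕ} {z₀ : ℂ} (hp : DifferentiableOn ℂ p (ball 0 1))
    (hp0 : p 0 = 1) (hjder : ∀ j : ℕ, 1 ≤ j → j ≤ m - 1 → iteratedDeriv j p 0 = 0)
    (hz₀ : z₀ ∈ ball (0 : ℂ) 1) (hre : ∀ z : ℂ, ‖z‖ < ‖z₀‖ → 0 < (p z).re)
    (hre0 : (p z₀).re = 0) :
    ∃ k : ℝ, m ≤ k ∧ 2 * (z₀ * deriv p z₀) = -k * (1 - p z₀ ^ 2) := by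
  have hz₀0 : z₀ ≠ 0 := by
    rintro rfl
    simp [hp0] at hre0
  have hpd : ∀ z, ‖z‖ ≤ ‖z₀‖ → DifferentiableAt ℂ p z := fun z hz =>
    hp.differentiableAt (isOpen_ball.mem_nhds
      (mem_ball_zero_iff.mpr (hz.trans_lt (mem_ball_zero_iff.mp hz₀))))
  have hre_le : ∀ z, ‖z‖ ≤ ‖z₀‖ → 0 ≤ (p z).re := fun z hz =>
    re_nonneg_of_norm_le (norm_ne_zero_iff.mpr hz₀0) hre (hpd z hz).continuousAt hz
  set w := fun z => (1 - p z) / (1 + p z) with hw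
  have hw_deriv : ∀ z, ‖z‖ ≤ ‖z₀‖ → HasDerivAt w (-2 * deriv p z / (1 + p z) ^ 2) z :=
    fun z hz => (hpd z hz).hasDerivAt.one_sub_div_one_add
      (one_add_ne_zero_of_re_nonneg (hre_le z hz))
  have hw_le : ∀ z, ‖z‖ ≤ ‖z₀‖ → ‖w z‖ ≤ 1 := fun z hz =>
    norm_one_sub_div_one_add_le_one (hre_le z hz)
  have hw_z₀ : ‖w z₀‖ = 1 := norm_one_sub_div_one_add_of_re_eq_zero hre0
  have hradial : ∀ t ∈ Ioo (0 : ℝ) 1, ‖w (t * z₀)‖ ≤ t ^ m * ‖w z₀‖ := fun t ht => by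
    rw [hw_z₀, mul_one]
    exact norm_apply_ofReal_mul_le_pow hz₀0
      (fun z hz =>
        (hw_deriv z (mem_ball_zero_iff.mp hz).le).differentiableAt.differentiableWithinAt)
      (fun z hz => mem_closedBall_zero_iff.mpr (hw_le z (mem_ball_zero_iff.mp hz).le))
      (natCast_le_analyticOrderAt_one_sub_div_one_add
        (hp.analyticAt (ball_mem_nhds 0 one_pos)) hp0 hjder) ht
  obtain ⟨k, hkm, hk⟩ := jack_lemma (hw_deriv z₀ le_rfl).differentiableAt
    (norm_ne_zero_iff.mp (hw_z₀ ▸ one_ne_zero)) (fun z hz => hw_z₀ ▸ hw_le z hz.le) hradial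
  refine ⟨k, hkm, ?_⟩
  have hden : 1 + p z₀ ≠ 0 := one_add_ne_zero_of_re_nonneg hre0.ge
  rw [(hw_deriv z₀ le_rfl).deriv, hw] at hk
  field_simp at hk
  linear_combination -hk

theorem nunokawa_case_neg_general (m : ℕ) (hm : 1 ≤ m) (p : ℂ → ℂ)
    (hp : DifferentiableOn ℂ p (ball (0:ℂ) 1))
    (hp0 : p 0 = 1)
    (hjder : ∀ j : ℕ, 1 ≤ j → j ≤ m - 1 → iteratedDeriv j p 0 = 0)
    (z₀ : ℂ) (hz₀ : z₀ ∈ ball (0:ℂ) 1)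
    (hre : ∀ z : ℂ, ‖z‖ < ‖z₀‖ → 0 < (p z).re)
    (hre0 : (p z₀).re = 0)
    (a : ℝ) (ha : 0 < a) (hpa : p z₀ = -Complex.I * (a : ℂ)) :
    ∃ k : ℝ, z₀ * deriv p z₀ / p z₀ = Complex.I * (k : ℂ) ∧
      k ≤ -((m : ℝ) / 2 * (a + 1 / a)) ∧
      -((m : ℝ) / 2 * (a + 1 / a)) ≤ -(m : ℝ) ∧ -(m : ℝ) ≤ (-1 : ℝ) := by
  obtain ⟨k, hkm, hk⟩ := nunokawa_lemma hp hp0 hjder hz₀ hre hre0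
  have hm' : (1 : ℝ) ≤ m := by exact_mod_cast hm
  have htwo : 2 ≤ a + 1 / a := by
    have : a + 1 / a - 2 = (a - 1) ^ 2 / a := by field_simp; ring
    linarith [this ▸ (by positivity : 0 ≤ (a - 1) ^ 2 / a)]
  refine ⟨-(k / 2 * (a + 1 / a)), ?_, ?_, ?_, neg_le_neg hm'⟩
  · have ha' : (a : ℂ) ≠ 0 := ofReal_ne_zero.mpr ha.ne'
    rw [hpa] at hk ⊢
    push_cast
    field_simp
    linear_combination -hk + (k : ℂ) * I_sq
  · exact neg_le_neg (by gcongr)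
  · nlinarith

/-- Modified Nunokawa lemma, case `p(z₀) = -i·a`, `a > 0`. -/
theorem nunokawa_case_neg (m : ℕ) (hm : 1 ≤ m) (p : ℂ → ℂ)
    (hp : DifferentiableOn ℂ p (ball (0:ℂ) 1))
    (hp0 : p 0 = 1)
    (hjder : ∀ j : ℕ, 1 ≤ j → j ≤ m - 1 → iteratedDeriv j p 0 = 0)
    (hmder : iteratedDeriv m p 0 ≠ 0)
    (hpne : ∀ z ∈ ball (0:ℂ) 1, p z ≠ 0)
    (z₀ : ℂ) (hz₀ : z₀ ∈ ball (0:ℂ) 1)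
    (hre : ∀ z : ℂ, ‖z‖ < ‖z₀‖ → 0 < (p z).re)
    (hre0 : (p z₀).re = 0) (hpz₀ : p z₀ ≠ 0)
    (a : ℝ) (ha : 0 < a) (hpa : p z₀ = -Complex.I * (a : ℂ)) :
    ∃ k : ℝ, z₀ * deriv p z₀ / p z₀ = Complex.I * (k : ℂ) ∧
      k ≤ -((m : ℝ) / 2 * (a + 1 / a)) ∧
      -((m : ℝ) / 2 * (a + 1 / a)) ≤ -(m : ℝ) ∧ -(m : ℝ) ≤ (-1 : ℝ) :=
  nunokawa_case_neg_general m hm p hp hp0 hjder z₀ hz₀ hre hre0 a ha hpa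
end

section
/- Let f be analytic in the open unit disc Δ = {z ∈ ℂ : |z| < 1} with f(0) = 0 and f′(0) = 1, and suppose f(z) ≠ 0 for all z ∈ Δ with z ≠ 0. If Re(z·f′(z)/f(z)) < 3/2 for all z ∈ Δ with z ≠ 0, then Re(z/f(z)) > 1/2 for all z ∈ Δ with z ≠ 0. -/
/-!
Write `f z = z g(z)` with `g = dslope f 0`, so `g 0 = 1` and `Re (z g'/g) < 1/2`. If `‖g - 1‖`
reached `1` in the disc, take a point `c` of smallest modulus where it does; Jack's lemma
(`c w'(c) = k w(c)` with real `k ≥ 1` for `w = g - 1`) and `Re (w/(1 + w)) = 1/2` on `‖w‖ = 1`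
give `Re (c g'(c)/g(c)) = k/2 ≥ 1/2`, a contradiction. Hence `‖g - 1‖ < 1`, which says exactly
`Re (1/g) > 1/2`, and `1/g = z/f`.
-/

open Complex ComplexConjugate Metric Set Filter Topology

theorem IsLocalMaxOn.hasDerivAt_nonneg_of_Iic {f : ℝ → ℝ} {f' a : ℝ}
    (h : IsLocalMaxOn f (Iic a) a) (hf : HasDerivAt f f' a) : 0 ≤ f' := by
  have hy : (-1 : ℝ) ∈ posTangentConeAt (Iic a) a :=
    mem_posTangentConeAt_of_segment_subset <| by
      rw [segment_symm, segment_eq_Icc (by linarith)]; exact Icc_subset_Iic_self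
  simpa using h.hasFDerivWithinAt_nonpos hf.hasFDerivAt.hasFDerivWithinAt hy

theorem HasDerivAt.norm_sq_comp {w : ℂ → ℂ} {γ : ℝ → ℂ} {w' γ' : ℂ} {t : ℝ}
    (hw : HasDerivAt w w' (γ t)) (hγ : HasDerivAt γ γ' t) :
    HasDerivAt (fun s => ‖w (γ s)‖ ^ 2) (2 * (w' * γ' * conj (w (γ t))).re) t := by
  simpa [Complex.inner] using (hw.comp t hγ).norm_sq

theorem two_mul_norm_sq_mul_re_inv (u : ℂ) :
    2 * ‖u‖ ^ 2 * (u⁻¹).re = ‖u‖ ^ 2 + 1 - ‖u - 1‖ ^ 2 := by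
  rcases eq_or_ne u 0 with rfl | hu
  · simp
  simp only [inv_re, ← normSq_eq_norm_sq]
  rw [mul_assoc, mul_div_cancel₀ _ (normSq_pos.2 hu).ne']
  simp only [normSq_apply, sub_re, sub_im, one_re, one_im]
  ring

theorem exists_norm_eq_isMaxOn_closedBall {E F : Type*} [NormedAddCommGroup E]
    [NormedSpace ℝ E] [ProperSpace E] [NormedAddCommGroup F] {w : E → F} {R M : ℝ} {z : E}
    (hw : ContinuousOn w (ball 0 R)) (hw0 : ‖w 0‖ < M) (hz : z ∈ ball 0 R) (hwz : M ≤ ‖w z‖) :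
    ∃ c ∈ ball 0 R, ‖w c‖ = M ∧ IsMaxOn (‖w ·‖) (closedBall 0 ‖c‖) c := by
  have hzR : closedBall (0 : E) ‖z‖ ⊆ ball 0 R := closedBall_subset_ball (mem_ball_zero_iff.1 hz)
  set K := closedBall (0 : E) ‖z‖ ∩ (‖w ·‖) ⁻¹' Ici M
  have hK : IsCompact K := (isCompact_closedBall 0 ‖z‖).of_isClosed_subset
    ((hw.mono hzR).norm.preimage_isClosed_of_isClosed isClosed_closedBall isClosed_Ici)
    inter_subset_left
  obtain ⟨c, ⟨hcz, hMc⟩, hmin⟩ :=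
    hK.exists_isMinOn ⟨z, by simp [K, hwz]⟩ continuous_norm.continuousOn
  have hcz : ‖c‖ ≤ ‖z‖ := mem_closedBall_zero_iff.1 hcz
  have hc0 : ‖c‖ ≠ 0 := fun h => (norm_eq_zero.1 h ▸ hw0).not_ge hMc
  have hcR : closedBall (0 : E) ‖c‖ ⊆ ball 0 R := (closedBall_subset_closedBall hcz).trans hzR
  -- `‖w‖ < M` below the minimal modulus `‖c‖`, hence `‖w‖ ≤ M` on the closure of that ball
  have hball : ball (0 : E) ‖c‖ ⊆ closedBall 0 ‖c‖ ∩ (‖w ·‖) ⁻¹' Iic M := fun x hx => by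
    have hxc : ‖x‖ < ‖c‖ := mem_ball_zero_iff.1 hx
    refine ⟨ball_subset_closedBall hx, show ‖w x‖ ≤ M from not_lt.1 fun hMx => ?_⟩
    exact hxc.not_ge (hmin ⟨mem_closedBall_zero_iff.2 (hxc.le.trans hcz), hMx.le⟩)
  have hle : closedBall (0 : E) ‖c‖ ⊆ (‖w ·‖) ⁻¹' Iic M := by
    rw [← closure_ball 0 hc0]
    exact (closure_minimal hball <| (hw.mono hcR).norm.preimage_isClosed_of_isClosed
      isClosed_closedBall isClosed_Iic).trans inter_subset_right
  have hcc : c ∈ closedBall (0 : E) ‖c‖ := mem_closedBall_zero_iff.2 le_rfl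
  have hwc : ‖w c‖ = M := le_antisymm (hle hcc) hMc
  exact ⟨c, hcR hcc, hwc, fun x hx => (hle hx).trans hwc.ge⟩

section JackLemma

variable {w : ℂ → ℂ} {R : ℝ} {c : ℂ}

theorem norm_apply_ofReal_mul_le_of_isMaxOn (hw : DifferentiableOn ℂ w (ball 0 ‖c‖))
    (hw0 : w 0 = 0) (hmax : IsMaxOn (‖w ·‖) (closedBall 0 ‖c‖) c) {s : ℝ}
    (hs : s ∈ Icc (0 : ℝ) 1) : ‖w (s * c)‖ ≤ s * ‖w c‖ := by
  rcases hs.2.eq_or_lt with rfl | hs1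
  · simp
  rcases eq_or_ne c 0 with rfl | hc
  · simp [hw0]
  have hsc : ‖(s : ℂ) * c‖ = s * ‖c‖ := by simp [abs_of_nonneg hs.1]
  have hmaps : MapsTo w (ball 0 ‖c‖) (closedBall (w 0) ‖w c‖) := fun x hx => by
    simpa [hw0] using hmax (ball_subset_closedBall hx)
  have := dist_le_div_mul_dist_of_mapsTo_ball hw hmaps
    (mem_ball_zero_iff.2 (hsc ▸ mul_lt_of_lt_one_left (norm_pos_iff.2 hc) hs1))
  simp only [hw0, dist_zero_right, hsc] at this
  refine this.trans_eq ?_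
  field_simp

theorem norm_sq_le_re_deriv_mul_mul_conj_of_isMaxOn (hw : DifferentiableOn ℂ w (ball 0 R))
    (hc : c ∈ ball 0 R) (hw0 : w 0 = 0) (hmax : IsMaxOn (‖w ·‖) (closedBall 0 ‖c‖) c) :
    ‖w c‖ ^ 2 ≤ (deriv w c * c * conj (w c)).re := by
  have hwd : HasDerivAt w (deriv w c) c :=
    (hw.differentiableAt (isOpen_ball.mem_nhds hc)).hasDerivAt
  have hγ : HasDerivAt (fun s : ℝ => (s : ℂ) * c) c 1 := by
    simpa using (hasDerivAt_id (1 : ℝ)).ofReal_comp.mul_const c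
  have hrad : HasDerivAt (fun s : ℝ => ‖w (s * c)‖ ^ 2)
      (2 * (deriv w c * c * conj (w c)).re) 1 := by
    simpa only [ofReal_one, one_mul] using
      HasDerivAt.norm_sq_comp (by simpa only [ofReal_one, one_mul] using hwd) hγ
  have hsq : HasDerivAt (fun s : ℝ => s ^ 2 * ‖w c‖ ^ 2) (2 * ‖w c‖ ^ 2) 1 := by
    simpa using (hasDerivAt_pow 2 (1 : ℝ)).mul_const (‖w c‖ ^ 2)
  have hloc : IsLocalMaxOn (fun s : ℝ => ‖w (s * c)‖ ^ 2 - s ^ 2 * ‖w c‖ ^ 2) (Iic 1) 1 := by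
    filter_upwards [Icc_mem_nhdsLE (zero_lt_one' ℝ)] with s hs
    have hcR : ball (0 : ℂ) ‖c‖ ⊆ ball 0 R := ball_subset_ball (mem_ball_zero_iff.1 hc).le
    have := norm_apply_ofReal_mul_le_of_isMaxOn (hw.mono hcR) hw0 hmax hs
    simp only [ofReal_one, one_mul, one_pow, sub_self, sub_nonpos]
    rw [← mul_pow]
    exact pow_le_pow_left₀ (norm_nonneg _) this 2
  linarith [hloc.hasDerivAt_nonneg_of_Iic (hrad.sub hsq)]

theorem im_deriv_mul_mul_conj_eq_zero_of_isMaxOn (hw : DifferentiableAt ℂ w c)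
    (hmax : IsMaxOn (‖w ·‖) (sphere 0 ‖c‖) c) : (deriv w c * c * conj (w c)).im = 0 := by
  have hγ : HasDerivAt (fun θ : ℝ => c * exp (θ * I)) (c * I) 0 := by
    simpa using ((hasDerivAt_id (0 : ℝ)).ofReal_comp.mul_const I).cexp.const_mul c
  have hderiv : HasDerivAt (fun θ : ℝ => ‖w (c * exp (θ * I))‖ ^ 2)
      (-2 * (deriv w c * c * conj (w c)).im) 0 := by
    have := HasDerivAt.norm_sq_comp
      (by simpa only [ofReal_zero, zero_mul, exp_zero, mul_one] using hw.hasDerivAt) hγ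
    simp only [ofReal_zero, zero_mul, exp_zero, mul_one] at this
    convert this using 1
    simp [mul_re, mul_im]
    ring
  refine (mul_eq_zero.1 (IsLocalMax.hasDerivAt_eq_zero ?_ hderiv)).resolve_left (by norm_num)
  refine Eventually.of_forall fun θ => ?_
  simpa using pow_le_pow_left₀ (norm_nonneg _)
    (hmax (show c * exp (θ * I) ∈ sphere 0 ‖c‖ by simp [norm_exp_ofReal_mul_I])) 2

theorem jack_lemma (hw : DifferentiableOn ℂ w (ball 0 R)) (hc : c ∈ ball 0 R) (hw0 : w 0 = 0)
    (hwc : w c ≠ 0) (hmax : IsMaxOn (‖w ·‖) (closedBall 0 ‖c‖) c) :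
    ∃ k : ℝ, 1 ≤ k ∧ c * deriv w c = k * w c := by
  set κ := deriv w c * c * conj (w c)
  have hre : ‖w c‖ ^ 2 ≤ κ.re := norm_sq_le_re_deriv_mul_mul_conj_of_isMaxOn hw hc hw0 hmax
  have him : κ.im = 0 := im_deriv_mul_mul_conj_eq_zero_of_isMaxOn
    (hw.differentiableAt (isOpen_ball.mem_nhds hc)) (hmax.on_subset sphere_subset_closedBall)
  have hM : 0 < ‖w c‖ ^ 2 := by positivity
  refine ⟨κ.re / ‖w c‖ ^ 2, (one_le_div hM).2 hre, ?_⟩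
  have hκ : (κ.re : ℂ) = κ := Complex.ext rfl (by simp [him])
  have hM' : (‖w c‖ ^ 2 : ℂ) ≠ 0 := by exact_mod_cast hM.ne'
  rw [ofReal_div, hκ, ofReal_pow, div_mul_eq_mul_div, eq_div_iff hM', mul_assoc,
    ← conj_mul' (w c)]
  ring

end JackLemma

theorem norm_sub_one_lt_one_of_re_mul_logDeriv_lt {g : ℂ → ℂ} {R : ℝ}
    (hg : DifferentiableOn ℂ g (ball 0 R)) (hg0 : g 0 = 1) (hgne : ∀ z ∈ ball 0 R, g z ≠ 0)
    (hlt : ∀ z ∈ ball 0 R, z ≠ 0 → (z * logDeriv g z).re < 1 / 2) :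
    ∀ z ∈ ball 0 R, ‖g z - 1‖ < 1 := by
  by_contra! ⟨z, hz, hgz⟩
  obtain ⟨c, hc, hgc, hmax⟩ := exists_norm_eq_isMaxOn_closedBall (w := (g · - 1))
    (hg.sub_const 1).continuousOn (by simp [hg0]) hz hgz
  have hc0 : c ≠ 0 := by rintro rfl; simp [hg0] at hgc
  obtain ⟨k, hk, hck⟩ := jack_lemma (hg.sub_const 1) hc (by simp [hg0])
    (by rw [← norm_ne_zero_iff, hgc]; exact one_ne_zero) hmax
  have hinv : ((g c)⁻¹).re = 1 / 2 := by
    have h := two_mul_norm_sq_mul_re_inv (g c)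
    have hpos : 0 < ‖g c‖ ^ 2 := by have := norm_pos_iff.2 (hgne c hc); positivity
    rw [hgc] at h
    nlinarith
  have : (c * logDeriv g c).re = k / 2 := by
    rw [logDeriv_apply, ← mul_div_assoc, ← deriv_sub_const (1 : ℂ), hck, mul_div_assoc,
      sub_div, div_self (hgne c hc), re_ofReal_mul, sub_re, one_re, one_div, hinv]
    ring
  linarith [hlt c hc hc0]

theorem re_z_div_f_gt_half_of_M32 (f : ℂ → ℂ)
    (hf : DifferentiableOn ℂ f (ball (0:ℂ) 1))
    (hf0 : f 0 = 0) (hf'0 : deriv f 0 = 1)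
    (hfne : ∀ z ∈ ball (0:ℂ) 1, z ≠ 0 → f z ≠ 0)
    (hre : ∀ z ∈ ball (0:ℂ) 1, z ≠ 0 → (z * deriv f z / f z).re < 3 / 2) :
    ∀ z ∈ ball (0:ℂ) 1, z ≠ 0 → 1 / 2 < (z / f z).re := by
  set g := dslope f 0
  have hfg : f = fun z => z * g z := funext fun z => by
    simpa [hf0] using (sub_smul_dslope f 0 z).symm
  have hg : DifferentiableOn ℂ g (ball 0 1) :=
    (differentiableOn_dslope (ball_mem_nhds 0 one_pos)).2 hf
  have hg0 : g 0 = 1 := by simp [g, hf'0]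
  have hgne : ∀ z ∈ ball (0 : ℂ) 1, g z ≠ 0 := fun z hz => by
    rcases eq_or_ne z 0 with rfl | hz0
    · simp [hg0]
    · exact right_ne_zero_of_mul (hfg ▸ hfne z hz hz0)
  have hlog : ∀ z ∈ ball (0 : ℂ) 1, z ≠ 0 → (z * logDeriv g z).re < 1 / 2 := fun z hz hz0 => by
    have := hre z hz hz0
    rw [mul_div_assoc, ← logDeriv_apply, hfg, logDeriv_mul (f := fun z => z) z hz0 (hgne z hz)
      differentiableAt_fun_id (hg.differentiableAt (isOpen_ball.mem_nhds hz)), logDeriv_id',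
      mul_add, mul_one_div_cancel hz0, add_re, one_re] at this
    linarith
  intro z hz hz0
  have hlt := norm_sub_one_lt_one_of_re_mul_logDeriv_lt hg hg0 hgne hlog z hz
  have hpos : 0 < ‖g z‖ ^ 2 := by have := norm_pos_iff.2 (hgne z hz); positivity
  rw [hfg, div_mul_cancel_left₀ hz0]
  nlinarith [two_mul_norm_sq_mul_re_inv (g z), pow_lt_one₀ (norm_nonneg _) hlt two_ne_zero]
end

section
/- Let f be analytic in the open unit disc Δ = {z ∈ ℂ : |z| < 1} with f(0) = 0 and f′(0) = 1, and suppose f(z) ≠ 0 for all z ∈ Δ with z ≠ 0. If Re(z·f′(z)/f(z)) < 3/2 for all z ∈ Δ with z ≠ 0, then |f(z)/z − 1| < 1 for all z ∈ Δ with z ≠ 0. -/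
/-!
Write `f z = z (1 + w z)` with `w` holomorphic and `w 0 = 0`. If `‖w‖ ≥ 1` somewhere, take a
point `z₀` where `‖w‖` is maximal on a closed disc around `0`. Jack's lemma gives
`z₀ w'(z₀) = k w(z₀)` with `k ≥ 1`: the Schwarz lemma controls the radial derivative of `‖w‖²`
and maximality on the circle kills the tangential one. Then
`z₀ f'(z₀) / f(z₀) = 1 + k w₀ / (1 + w₀)`, and `Re (w₀ / (1 + w₀)) ≥ 1/2` once `‖w₀‖ ≥ 1`,
so the real part is at least `3/2`.
-/

open Complex Metric Set Filter

theorem one_half_le_re_div_one_add {u : ℂ} (hu : 1 ≤ ‖u‖) (hu' : 1 + u ≠ 0) :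
    1 / 2 ≤ (u / (1 + u)).re := by
  have hsq : 1 ≤ normSq u := by rw [normSq_eq_norm_sq]; nlinarith
  have hpos : 0 < normSq (1 + u) := normSq_pos.mpr hu'
  have hden : normSq (1 + u) = 1 + 2 * u.re + normSq u := by
    simp only [normSq_apply, add_re, add_im, one_re, one_im]; ring
  have hnum : u.re * (1 + u).re + u.im * (1 + u).im = u.re + normSq u := by
    simp only [normSq_apply, add_re, add_im, one_re, one_im]; ring
  rw [div_re, ← add_div, hnum, le_div_iff₀ hpos, hden]
  linarith

theorem hasDerivAt_norm_sq_comp {w : ℂ → ℂ} {w' γ' : ℂ} {γ : ℝ → ℂ} {t : ℝ}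
    (hw : HasDerivAt w w' (γ t)) (hγ : HasDerivAt γ γ' t) :
    HasDerivAt (fun s => ‖w (γ s)‖ ^ 2) (2 * (starRingEnd ℂ (w (γ t)) * (w' * γ')).re) t := by
  have h := (hw.comp t hγ).norm_sq
  rw [Complex.inner] at h
  simpa [Function.comp_def, mul_comm] using h

theorem IsLocalMaxOn.hasDerivAt_nonneg_of_Iic_s7 {φ : ℝ → ℝ} {a φ' : ℝ}
    (hmax : IsLocalMaxOn φ (Iic a) a) (hφ : HasDerivAt φ φ' a) : 0 ≤ φ' := by
  have hcone : (-1 : ℝ) ∈ posTangentConeAt (Iic a) a :=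
    mem_posTangentConeAt_of_segment_subset ((convex_Iic a).segment_subset self_mem_Iic (by simp))
  have := hmax.hasFDerivWithinAt_nonpos hφ.hasFDerivAt.hasFDerivWithinAt hcone
  simpa using this

section MaxOnCircle

variable {w : ℂ → ℂ} {z₀ : ℂ}

theorem sq_norm_le_re_conj_mul_deriv_of_isMaxOn (hw : DifferentiableOn ℂ w (ball 0 ‖z₀‖))
    (hz₀ : DifferentiableAt ℂ w z₀) (hw0 : w 0 = 0)
    (hmax : IsMaxOn (‖w ·‖) (closedBall 0 ‖z₀‖) z₀) :
    ‖w z₀‖ ^ 2 ≤ (starRingEnd ℂ (w z₀) * (z₀ * deriv w z₀)).re := by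
  rcases eq_or_ne z₀ 0 with rfl | hne
  · simp [hw0]
  have hR : 0 < ‖z₀‖ := norm_pos_iff.mpr hne
  have hmaps : MapsTo w (ball 0 ‖z₀‖) (closedBall (w 0) ‖w z₀‖) := fun z hz => by
    simpa [hw0] using hmax (ball_subset_closedBall hz)
  have hschwarz : ∀ t : ℝ, 0 ≤ t → t ≤ 1 → ‖w (t * z₀)‖ ≤ ‖w z₀‖ * t := by
    intro t ht0 ht1
    rcases ht1.lt_or_eq with ht1 | rfl
    · have hz : (t : ℂ) * z₀ ∈ ball 0 ‖z₀‖ := by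
        rw [mem_ball_zero_iff, norm_mul, norm_real, Real.norm_of_nonneg ht0]
        exact mul_lt_of_lt_one_left hR ht1
      have := dist_le_div_mul_dist_of_mapsTo_ball hw hmaps hz
      rw [hw0, dist_zero_right, dist_zero_right, norm_mul, norm_real,
        Real.norm_of_nonneg ht0] at this
      calc ‖w (t * z₀)‖ ≤ ‖w z₀‖ / ‖z₀‖ * (t * ‖z₀‖) := this
        _ = ‖w z₀‖ * t := by field_simp
    · simp
  have hγ : HasDerivAt (fun t : ℝ => (t : ℂ) * z₀) z₀ 1 := by
    simpa using (hasDerivAt_id (1 : ℝ)).ofReal_comp.mul_const z₀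
  have hw' : HasDerivAt w (deriv w z₀) (((1 : ℝ) : ℂ) * z₀) := by
    rw [ofReal_one, one_mul]; exact hz₀.hasDerivAt
  have hderiv := (hasDerivAt_norm_sq_comp (γ := fun t : ℝ => (t : ℂ) * z₀) hw' hγ).sub
    ((hasDerivAt_pow 2 (1 : ℝ)).const_mul (‖w z₀‖ ^ 2))
  have hlocmax : IsLocalMaxOn (fun t : ℝ => ‖w (t * z₀)‖ ^ 2 - ‖w z₀‖ ^ 2 * t ^ 2) (Iic 1) 1 := by
    filter_upwards [mem_nhdsWithin_of_mem_nhds (Ioi_mem_nhds one_pos), self_mem_nhdsWithin]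
      with t (ht0 : 0 < t) (ht1 : t ≤ 1)
    have := hschwarz t ht0.le ht1
    simp only [ofReal_one, one_mul, one_pow, mul_one, sub_self, sub_nonpos]
    rw [← mul_pow]
    exact pow_le_pow_left₀ (norm_nonneg _) this 2
  have := hlocmax.hasDerivAt_nonneg_of_Iic_s7 hderiv
  rw [ofReal_one, one_mul, mul_comm (deriv w z₀),
    show ((2 : ℕ) : ℝ) * 1 ^ (2 - 1) = 2 by norm_num] at this
  linarith

theorem im_conj_mul_deriv_eq_zero_of_isMaxOn (hz₀ : DifferentiableAt ℂ w z₀)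
    (hmax : IsMaxOn (‖w ·‖) (sphere 0 ‖z₀‖) z₀) :
    (starRingEnd ℂ (w z₀) * (z₀ * deriv w z₀)).im = 0 := by
  have hγ : HasDerivAt (fun θ : ℝ => exp (θ * I) * z₀) (I * z₀) 0 := by
    simpa using (((hasDerivAt_id (0 : ℝ)).ofReal_comp.mul_const I).cexp).mul_const z₀
  have hw' : HasDerivAt w (deriv w z₀) (exp (((0 : ℝ) : ℂ) * I) * z₀) := by
    rw [ofReal_zero, zero_mul, exp_zero, one_mul]; exact hz₀.hasDerivAt
  have hlocmax : IsLocalMax (fun θ : ℝ => ‖w (exp (θ * I) * z₀)‖ ^ 2) 0 := by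
    refine Eventually.of_forall fun θ => ?_
    have hθ : exp (θ * I) * z₀ ∈ sphere 0 ‖z₀‖ := by
      simp [norm_exp_ofReal_mul_I]
    simpa using pow_le_pow_left₀ (norm_nonneg _) (hmax hθ) 2
  have := hlocmax.hasDerivAt_eq_zero
    (hasDerivAt_norm_sq_comp (γ := fun θ : ℝ => exp (θ * I) * z₀) hw' hγ)
  rw [ofReal_zero, zero_mul, exp_zero, one_mul,
    show deriv w z₀ * (I * z₀) = I * (z₀ * deriv w z₀) by ring, mul_left_comm, I_mul_re] at this
  linarith

/-- Jack's lemma. -/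
theorem exists_one_le_mul_deriv_eq_of_isMaxOn (hw : DifferentiableOn ℂ w (ball 0 ‖z₀‖))
    (hz₀ : DifferentiableAt ℂ w z₀) (hw0 : w 0 = 0) (hwz₀ : w z₀ ≠ 0)
    (hmax : IsMaxOn (‖w ·‖) (closedBall 0 ‖z₀‖) z₀) :
    ∃ k : ℝ, 1 ≤ k ∧ z₀ * deriv w z₀ = k * w z₀ := by
  have hre := sq_norm_le_re_conj_mul_deriv_of_isMaxOn hw hz₀ hw0 hmax
  have him := im_conj_mul_deriv_eq_zero_of_isMaxOn hz₀ (hmax.on_subset sphere_subset_closedBall)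
  have hM : 0 < ‖w z₀‖ ^ 2 := by positivity
  refine ⟨(starRingEnd ℂ (w z₀) * (z₀ * deriv w z₀)).re / ‖w z₀‖ ^ 2, (one_le_div hM).mpr hre, ?_⟩
  have hζreal : ((starRingEnd ℂ (w z₀) * (z₀ * deriv w z₀)).re : ℂ) =
      starRingEnd ℂ (w z₀) * (z₀ * deriv w z₀) := ext rfl (by simp only [ofReal_im, him])
  have hnorm : ((‖w z₀‖ ^ 2 : ℝ) : ℂ) = starRingEnd ℂ (w z₀) * w z₀ := by
    rw [conj_mul']; push_cast; rfl
  have hconj : starRingEnd ℂ (w z₀) ≠ 0 := (map_ne_zero _).mpr hwz₀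
  rw [ofReal_div, hζreal, hnorm]
  field_simp

end MaxOnCircle

theorem mul_deriv_div_eq_one_add {f w : ℂ → ℂ} {z : ℂ} (hfw : ∀ z, f z = z * (1 + w z))
    (hw : DifferentiableAt ℂ w z) (hz : z ≠ 0) (hwz : 1 + w z ≠ 0) :
    z * deriv f z / f z = 1 + z * deriv w z / (1 + w z) := by
  have hf : HasDerivAt f (1 * (1 + w z) + z * deriv w z) z := by
    rw [funext hfw]; exact (hasDerivAt_id z).mul (hw.hasDerivAt.const_add 1)
  rw [hf.deriv, hfw]
  field_simp

theorem f_div_z_near_one_of_M32 (f : ℂ → ℂ)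
    (hf : DifferentiableOn ℂ f (ball (0:ℂ) 1))
    (hf0 : f 0 = 0) (hf'0 : deriv f 0 = 1)
    (hfne : ∀ z ∈ ball (0:ℂ) 1, z ≠ 0 → f z ≠ 0)
    (hre : ∀ z ∈ ball (0:ℂ) 1, z ≠ 0 → (z * deriv f z / f z).re < 3 / 2) :
    ∀ z ∈ ball (0:ℂ) 1, z ≠ 0 → ‖f z / z - 1‖ < 1 := by
  intro z₁ hz₁ hz₁0
  by_contra! hfar
  set w : ℂ → ℂ := fun z => dslope f 0 z - 1
  have hw : DifferentiableOn ℂ w (ball 0 1) :=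
    ((differentiableOn_dslope (ball_mem_nhds 0 one_pos)).mpr hf).sub_const 1
  have hw0 : w 0 = 0 := by simp [w, hf'0]
  have hfw : ∀ z, f z = z * (1 + w z) := fun z => by
    simpa [w, hf0] using (sub_smul_dslope f 0 z).symm
  have hwz₁ : w z₁ = f z₁ / z₁ - 1 := by simp [w, dslope_of_ne _ hz₁0, slope_def_field, hf0]
  have hK : closedBall (0 : ℂ) ‖z₁‖ ⊆ ball 0 1 := closedBall_subset_ball (mem_ball_zero_iff.mp hz₁)
  obtain ⟨z₀, hz₀K, hmax⟩ := (isCompact_closedBall (0 : ℂ) ‖z₁‖).exists_isMaxOn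
    (nonempty_closedBall.mpr (norm_nonneg _)) (hw.continuousOn.mono hK).norm
  have hwz₀ : 1 ≤ ‖w z₀‖ := (hwz₁ ▸ hfar).trans (hmax (mem_closedBall_zero_iff.mpr le_rfl))
  have hz₀ : z₀ ∈ ball 0 1 := hK hz₀K
  have hz₀0 : z₀ ≠ 0 := by rintro rfl; norm_num [hw0] at hwz₀
  have hwd : DifferentiableAt ℂ w z₀ := hw.differentiableAt (isOpen_ball.mem_nhds hz₀)
  have h1w : 1 + w z₀ ≠ 0 := fun h => hfne z₀ hz₀ hz₀0 (by rw [hfw, h, mul_zero])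
  obtain ⟨k, hk, hjack⟩ := exists_one_le_mul_deriv_eq_of_isMaxOn
    (hw.mono (ball_subset_ball (mem_ball_zero_iff.mp hz₀).le)) hwd hw0
    (norm_pos_iff.mp (one_pos.trans_le hwz₀))
    (hmax.on_subset (closedBall_subset_closedBall (mem_closedBall_zero_iff.mp hz₀K)))
  have hlt := hre z₀ hz₀ hz₀0
  rw [mul_deriv_div_eq_one_add hfw hwd hz₀0 h1w, hjack, mul_div_assoc, add_re, one_re,
    re_ofReal_mul] at hlt
  nlinarith [one_half_le_re_div_one_add hwz₀ h1w]
end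

section
/- Let f be analytic in the open unit disc Δ = {z ∈ ℂ : |z| < 1} with f(0) = 0 and f′(0) = 1, and suppose f(z) ≠ 0 for all z ∈ Δ with z ≠ 0. If f is starlike of order 1/2, i.e. Re(z·f′(z)/f(z)) > 1/2 for all z ∈ Δ with z ≠ 0, then |z/f(z) − 1| < 1 for all z ∈ Δ with z ≠ 0. -/
open Complex Metric Set

/-! Write `z / f z = p z`, where `p = (dslope f 0)⁻¹` is holomorphic and zero-free in `Δ` with
`p 0 = 1`, and `z f'/f = 1 - z p'/p`; so the hypothesis says `Re (z p'/p) < 1/2`.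
If `‖p - 1‖ ≥ 1` somewhere, let `z₀` maximise `‖ω‖`, `ω = p - 1`, on a closed disc about `0`
reaching that point. Jack's lemma gives `z₀ ω'(z₀) = k ω(z₀)` with real `k ≥ 1`, hence
`z₀ p'(z₀)/p(z₀) = k ω/(1 + ω)` at `z₀`, and `Re (ω/(1 + ω)) ≥ 1/2` as `‖ω(z₀)‖ ≥ 1`. -/

theorem HasDerivAt.nonpos_of_forall_le {g : ℝ → ℝ} {d a : ℝ} (hg : HasDerivAt g d a)
    (hle : ∀ t, a ≤ t → g t ≤ g a) : d ≤ 0 := by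
  have hmax : IsLocalMaxOn g (Ici a) a := Filter.eventually_of_mem self_mem_nhdsWithin hle
  have hseg : segment ℝ a (a + 1) ⊆ Ici a := by
    rw [segment_eq_Icc (by linarith)]
    exact Icc_subset_Ici_self
  simpa using hmax.hasFDerivWithinAt_nonpos hg.hasFDerivAt.hasFDerivWithinAt
    (mem_posTangentConeAt_of_segment_subset hseg)

theorem inv_dslope_eq_div {𝕜 : Type*} [NontriviallyNormedField 𝕜] {f : 𝕜 → 𝕜} (hf0 : f 0 = 0)
    {u : 𝕜} (hu : u ≠ 0) : (dslope f 0 u)⁻¹ = u / f u := by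
  rw [dslope_of_ne _ hu, slope_def_field, hf0, sub_zero, sub_zero, inv_div]

theorem mul_logDeriv_div_self {𝕜 : Type*} [NontriviallyNormedField 𝕜] {f : 𝕜 → 𝕜} {u : 𝕜}
    (hu : u ≠ 0) (hfu : f u ≠ 0) (hf : DifferentiableAt 𝕜 f u) :
    u * logDeriv (fun v => v / f v) u = 1 - u * logDeriv f u := by
  rw [logDeriv_div (f := fun v => v) u hu hfu differentiableAt_fun_id hf, logDeriv_id']
  field_simp

namespace Complex

theorem norm_le_div_mul_norm_of_mapsTo_closedBall {ω : ℂ → ℂ} {r M : ℝ}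
    (hω : DifferentiableOn ℂ ω (ball 0 r)) (hω0 : ω 0 = 0)
    (hM : MapsTo ω (closedBall 0 r) (closedBall 0 M)) {u : ℂ} (hu : u ∈ closedBall 0 r) :
    ‖ω u‖ ≤ M / r * ‖u‖ := by
  rw [mem_closedBall_zero_iff] at hu
  rcases hu.lt_or_eq with hlt | heq
  · have hmaps : MapsTo ω (ball 0 r) (closedBall (ω 0) M) := by
      rw [hω0]
      exact hM.mono_left ball_subset_closedBall
    simpa [hω0] using dist_le_div_mul_dist_of_mapsTo_ball hω hmaps (mem_ball_zero_iff.mpr hlt)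
  · rcases eq_or_ne r 0 with rfl | hr
    · simp [norm_eq_zero.mp heq, hω0]
    · rw [heq, div_mul_cancel₀ _ hr]
      exact mem_closedBall_zero_iff.mp (hM (mem_closedBall_zero_iff.mpr heq.le))

section MaxOnCircle

variable {ω : ℂ → ℂ} {z₀ : ℂ} (hω : DifferentiableOn ℂ ω (ball 0 ‖z₀‖)) (hω0 : ω 0 = 0)
  (hmax : IsMaxOn (‖ω ·‖) (closedBall 0 ‖z₀‖) z₀) (hne : ω z₀ ≠ 0)
include hω hω0 hmax hne

theorem re_div_le_exp_of_isMaxOn_norm {h : ℂ} (hh : h.re ≤ 0) {t : ℝ} (ht : 0 ≤ t) :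
    (ω (z₀ * exp (t * h)) / ω z₀).re ≤ Real.exp (t * h.re) := by
  have hw : 0 < ‖ω z₀‖ := norm_pos_iff.mpr hne
  have hz₀ : 0 < ‖z₀‖ := norm_pos_iff.mpr (by rintro rfl; exact hne hω0)
  have hnorm : ‖z₀ * exp (t * h)‖ = ‖z₀‖ * Real.exp (t * h.re) := by
    rw [norm_mul, norm_exp, re_ofReal_mul]
  have hmem : z₀ * exp (t * h) ∈ closedBall 0 ‖z₀‖ := by
    rw [mem_closedBall_zero_iff, hnorm]
    exact mul_le_of_le_one_right hz₀.le
      (Real.exp_le_one_iff.mpr (mul_nonpos_of_nonneg_of_nonpos ht hh))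
  have hschwarz : ‖ω (z₀ * exp (t * h))‖ ≤ ‖ω z₀‖ / ‖z₀‖ * ‖z₀ * exp (t * h)‖ :=
    norm_le_div_mul_norm_of_mapsTo_closedBall hω hω0
      (fun u hu => mem_closedBall_zero_iff.mpr (hmax hu)) hmem
  refine (re_le_norm _).trans ?_
  rw [norm_div, div_le_iff₀ hw]
  calc _ ≤ _ := hschwarz
    _ = _ := by rw [hnorm]; field_simp

/-- By the Schwarz lemma, along `t ↦ z₀ exp (t h)`, `t ≥ 0`, the function
`Re (ω / ω z₀) - exp (t Re h)` is maximal at `t = 0`, so its derivative there is nonpositive. -/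
theorem re_mul_le_re_of_isMaxOn_norm (hωz₀ : DifferentiableAt ℂ ω z₀) {h : ℂ} (hh : h.re ≤ 0) :
    (z₀ * deriv ω z₀ / ω z₀ * h).re ≤ h.re := by
  let φ : ℝ → ℝ := fun t => (ω (z₀ * exp (t * h)) / ω z₀).re - Real.exp (t * h.re)
  have hpath : HasDerivAt (fun s : ℂ => z₀ * exp (s * h)) (z₀ * h) 0 := by
    simpa using ((hasDerivAt_mul_const (x := (0 : ℂ)) h).cexp).const_mul z₀
  have hG : HasDerivAt (fun s : ℂ => ω (z₀ * exp (s * h)) / ω z₀)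
      (z₀ * deriv ω z₀ / ω z₀ * h) 0 := by
    have hω' : HasDerivAt ω (deriv ω z₀) (z₀ * exp (0 * h)) := by simpa using hωz₀.hasDerivAt
    exact ((hω'.comp 0 hpath).div_const (ω z₀)).congr_deriv (by ring)
  have hre : HasDerivAt (fun t : ℝ => (ω (z₀ * exp (t * h)) / ω z₀).re)
      (z₀ * deriv ω z₀ / ω z₀ * h).re 0 := hG.real_of_complex
  have hφ : HasDerivAt φ ((z₀ * deriv ω z₀ / ω z₀ * h).re - h.re) 0 :=
    (hre.sub ((hasDerivAt_mul_const (x := (0 : ℝ)) h.re).exp)).congr_deriv (by simp)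
  have hφ0 : φ 0 = 0 := by simp [φ, hne]
  have := hφ.nonpos_of_forall_le fun t ht => by
    simpa [hφ0, φ] using re_div_le_exp_of_isMaxOn_norm hω hω0 hmax hne hh ht
  linarith

/-- **Jack's lemma**. -/
theorem exists_one_le_mul_deriv_eq_of_isMaxOn_norm (hωz₀ : DifferentiableAt ℂ ω z₀) :
    ∃ k : ℝ, 1 ≤ k ∧ z₀ * deriv ω z₀ = k * ω z₀ := by
  set k := z₀ * deriv ω z₀ / ω z₀
  have hre := re_mul_le_re_of_isMaxOn_norm hω hω0 hmax hne hωz₀ (h := -1) (by simp)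
  have him := re_mul_le_re_of_isMaxOn_norm hω hω0 hmax hne hωz₀ (h := I) (by simp)
  have him' := re_mul_le_re_of_isMaxOn_norm hω hω0 hmax hne hωz₀ (h := -I) (by simp)
  simp only [mul_neg, mul_one, neg_re, one_re, mul_I_re, neg_neg, I_re, neg_zero] at hre him him'
  refine ⟨k.re, by linarith, ?_⟩
  have hk : (k.re : ℂ) = k := Complex.ext rfl (by simp; linarith)
  rw [hk, div_mul_cancel₀ _ hne]

end MaxOnCircle

theorem one_half_le_re_div_one_add {w : ℂ} (hw : 1 ≤ ‖w‖) (hw1 : 1 + w ≠ 0) :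
    1 / 2 ≤ (w / (1 + w)).re := by
  have hpos : 0 < normSq (1 + w) := normSq_pos.mpr hw1
  have hw2 : 1 ≤ w.re * w.re + w.im * w.im := by
    rw [← normSq_apply, ← Complex.sq_norm]
    nlinarith
  rw [div_re, ← add_div, le_div_iff₀ hpos]
  simp only [normSq_apply, add_re, add_im, one_re, one_im]
  nlinarith

theorem norm_sub_one_lt_one_of_re_mul_logDeriv_lt_half {p : ℂ → ℂ}
    (hp : DifferentiableOn ℂ p (ball 0 1)) (hp0 : p 0 = 1) (hpne : ∀ u ∈ ball (0 : ℂ) 1, p u ≠ 0)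
    (hlt : ∀ u ∈ ball (0 : ℂ) 1, u ≠ 0 → (u * logDeriv p u).re < 1 / 2)
    {z : ℂ} (hz : z ∈ ball (0 : ℂ) 1) : ‖p z - 1‖ < 1 := by
  by_contra! hz1
  set ω : ℂ → ℂ := fun u => p u - 1
  have hω : DifferentiableOn ℂ ω (ball 0 1) := hp.sub_const 1
  have hK : closedBall (0 : ℂ) ‖z‖ ⊆ ball 0 1 := closedBall_subset_ball (mem_ball_zero_iff.mp hz)
  obtain ⟨z₀, hz₀K, hmax⟩ := (isCompact_closedBall (0 : ℂ) ‖z‖).exists_isMaxOn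
    ⟨z, mem_closedBall_zero_iff.mpr le_rfl⟩ (hω.continuousOn.mono hK).norm
  have hz₀ : z₀ ∈ ball (0 : ℂ) 1 := hK hz₀K
  have hωz₀ : 1 ≤ ‖ω z₀‖ := hz1.trans (hmax (mem_closedBall_zero_iff.mpr le_rfl))
  have hne : ω z₀ ≠ 0 := norm_pos_iff.mp (one_pos.trans_le hωz₀)
  have hz₀0 : z₀ ≠ 0 := by rintro rfl; simp [ω, hp0] at hne
  obtain ⟨k, hk1, hk⟩ := exists_one_le_mul_deriv_eq_of_isMaxOn_norm
    (hω.mono (ball_subset_ball (mem_ball_zero_iff.mp hz₀).le)) (by simp [ω, hp0])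
    (hmax.on_subset (closedBall_subset_closedBall (mem_closedBall_zero_iff.mp hz₀K))) hne
    (hω.differentiableAt (isOpen_ball.mem_nhds hz₀))
  have hlog : z₀ * logDeriv p z₀ = k * (ω z₀ / (1 + ω z₀)) := by
    rw [logDeriv_apply, ← mul_div_assoc, ← mul_div_assoc, ← hk]
    simp [ω]
  have hhalf := one_half_le_re_div_one_add hωz₀ (by simpa [ω] using hpne z₀ hz₀)
  have := hlt z₀ hz₀ hz₀0
  rw [hlog, re_ofReal_mul] at this
  nlinarith

end Complex

theorem z_div_f_near_one_of_starlike_half (f : ℂ → ℂ)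
    (hf : DifferentiableOn ℂ f (ball (0:ℂ) 1))
    (hf0 : f 0 = 0) (hf'0 : deriv f 0 = 1)
    (hfne : ∀ z ∈ ball (0:ℂ) 1, z ≠ 0 → f z ≠ 0)
    (hstar : ∀ z ∈ ball (0:ℂ) 1, z ≠ 0 → 1 / 2 < (z * deriv f z / f z).re) :
    ∀ z ∈ ball (0:ℂ) 1, z ≠ 0 → ‖z / f z - 1‖ < 1 := by
  intro z hz hz0
  set g := dslope f 0
  have hg : DifferentiableOn ℂ g (ball 0 1) :=
    (differentiableOn_dslope (isOpen_ball.mem_nhds (mem_ball_self one_pos))).mpr hf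
  have hgne : ∀ u ∈ ball (0 : ℂ) 1, g u ≠ 0 := by
    intro u hu
    rcases eq_or_ne u 0 with rfl | hu0
    · simp [g, hf'0]
    · simpa [← inv_dslope_eq_div hf0 hu0] using div_ne_zero hu0 (hfne u hu hu0)
  have hp := norm_sub_one_lt_one_of_re_mul_logDeriv_lt_half (p := fun u => (g u)⁻¹)
    (hg.inv hgne) (by simp [g, hf'0]) (fun u hu => inv_ne_zero (hgne u hu)) ?_ hz
  · rwa [inv_dslope_eq_div hf0 hz0] at hp
  intro u hu hu0
  have hpu : (fun v => (g v)⁻¹) =ᶠ[nhds u] fun v => v / f v :=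
    (eventually_ne_nhds hu0).mono fun v hv => inv_dslope_eq_div hf0 hv
  rw [(logDeriv_congr_nhds hpu).eq_of_nhds, mul_logDeriv_div_self hu0 (hfne u hu hu0)
    (hf.differentiableAt (isOpen_ball.mem_nhds hu)), sub_re, one_re, logDeriv_apply,
    ← mul_div_assoc]
  linarith [hstar u hu hu0]
end
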